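/- arXiv:1606.05622 — 3 statements merged into one kernel-verified Lean document; each statement's English description precedes it below -/
import Mathlib

section
/- For every mass ratio μ with 0 < μ < 1/2, set l = (1 − 2√(μ(1−μ)))/(2(1−2μ)). A point (q, p) ∈ (ℝ² ∖ {E, M}) × ℝ² is a critical point of the Hamiltonian H_μ(q,p) = |p|²/2 − (1−μ)/‖q−E‖ − μ/‖q−M‖ (i.e., the Fréchet derivative of H_μ at (q,p) vanishes) if and only if p = 0 and q = (l, 0). -/
/-- The position of the Earth: E = (-1/2, 0). -/
noncomputable def Earth : EuclideanSpace ℝ (Fin 2) := !₂[-(1/2 : ℝ), 0]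

/-- The position of the Moon: M = (1/2, 0). -/
noncomputable def Moon : EuclideanSpace ℝ (Fin 2) := !₂[(1/2 : ℝ), 0]

/-- The Hamiltonian of the Euler problem of two fixed centers:
H_μ(q,p) = |p|²/2 - (1-μ)/‖q-E‖ - μ/‖q-M‖. -/
noncomputable def eulerHamiltonian (μ : ℝ)
    (x : EuclideanSpace ℝ (Fin 2) × EuclideanSpace ℝ (Fin 2)) : ℝ :=
  ‖x.2‖ ^ 2 / 2 - (1 - μ) / ‖x.1 - Earth‖ - μ / ‖x.1 - Moon‖

/-!
The derivative of `H_μ` at `(q, p)` is `(v, w) ↦ ⟪∇V(q), v⟫ + ⟪p, w⟫`, where `V` is the potential,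
so the critical points are the points `p = 0` with `∇V(q) = 0`. The two attractions cancel only if
`q - E` and `q - M` point in opposite directions with `(1 - μ) / ‖q - E‖² = μ / ‖q - M‖²`, i.e.
`q` is the point dividing the segment `EM` in the ratio `√(1 - μ) : √μ`, which is `(l, 0)`.
-/

open ContinuousLinearMap

theorem ContinuousLinearMap.coprod_eq_zero_iff {R M₁ M₂ M : Type*} [Semiring R]
    [TopologicalSpace M] [AddCommMonoid M] [Module R M] [ContinuousAdd M]
    [TopologicalSpace M₁] [AddCommMonoid M₁] [Module R M₁]
    [TopologicalSpace M₂] [AddCommMonoid M₂] [Module R M₂]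
    {f : M₁ →L[R] M} {g : M₂ →L[R] M} : f.coprod g = 0 ↔ f = 0 ∧ g = 0 := by
  refine ⟨fun h => ⟨?_, ?_⟩, fun ⟨hf, hg⟩ => by ext <;> simp [hf, hg]⟩
  · rw [← coprod_comp_inl f g, h, zero_comp]
  · rw [← coprod_comp_inr f g, h, zero_comp]

section InnerProductSpace

variable {F : Type*} [NormedAddCommGroup F] [InnerProductSpace ℝ F]

theorem innerSL_eq_zero_iff {x : F} : innerSL ℝ x = 0 ↔ x = 0 := by
  rw [← map_zero (innerSL ℝ), innerSL_inj]

theorem hasFDerivAt_inv_norm_sub {a x : F} (hx : x ≠ a) :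
    HasFDerivAt (fun y => ‖y - a‖⁻¹) (-(‖x - a‖ ^ 3)⁻¹ • innerSL ℝ (x - a)) x := by
  have hr : ‖x - a‖ ≠ 0 := norm_ne_zero_iff.2 (sub_ne_zero.2 hx)
  have hnorm : HasFDerivAt (fun y => ‖y - a‖) (‖x - a‖⁻¹ • innerSL ℝ (x - a)) x := by
    have h := ((hasFDerivAt_id x).sub_const a).norm_sq.sqrt (by simpa using hr)
    simp only [id_eq, Real.sqrt_sq (norm_nonneg _)] at h
    refine h.congr_fderiv ?_
    ext v
    simp only [one_div, mul_inv_rev, map_sub, comp_id, smul_apply, sub_apply, coe_innerSL_apply,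
      nsmul_eq_mul, Nat.cast_ofNat, smul_eq_mul]
    field_simp
  refine ((hasDerivAt_inv hr).comp_hasFDerivAt x hnorm).congr_fderiv ?_
  ext v
  simp only [map_sub, neg_smul, neg_apply, smul_apply, sub_apply, coe_innerSL_apply, smul_eq_mul,
    neg_inj]
  field_simp

end InnerProductSpace

section NormedSpace

variable {F : Type*} [NormedAddCommGroup F] [NormedSpace ℝ F]

/-- The gradient of the potential `q ↦ -α / ‖q - a‖ - β / ‖q - b‖` of two attracting centers. -/
noncomputable def twoCenterGradient (α β : ℝ) (a b q : F) : F :=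
  (α / ‖q - a‖ ^ 3) • (q - a) + (β / ‖q - b‖ ^ 3) • (q - b)

noncomputable def twoCenterEquilibrium (α β : ℝ) (a b : F) : F :=
  (√α + √β)⁻¹ • (√β • a + √α • b)

theorem twoCenterGradient_eq_zero_iff {α β : ℝ} {a b q : F} (hα : 0 < α) (hβ : 0 < β)
    (ha : q ≠ a) (hb : q ≠ b) :
    twoCenterGradient α β a b q = 0 ↔ q = twoCenterEquilibrium α β a b := by
  obtain ⟨A, hA, rfl⟩ : ∃ A, 0 < A ∧ A ^ 2 = α := ⟨√α, by positivity, Real.sq_sqrt hα.le⟩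
  obtain ⟨B, hB, rfl⟩ : ∃ B, 0 < B ∧ B ^ 2 = β := ⟨√β, by positivity, Real.sq_sqrt hβ.le⟩
  unfold twoCenterGradient twoCenterEquilibrium
  rw [Real.sqrt_sq hA.le, Real.sqrt_sq hB.le]
  have hr : 0 < ‖q - a‖ := norm_pos_iff.2 (sub_ne_zero.2 ha)
  have hs : 0 < ‖q - b‖ := norm_pos_iff.2 (sub_ne_zero.2 hb)
  constructor
  · intro h
    have hnorm : A ^ 2 / ‖q - a‖ ^ 2 = B ^ 2 / ‖q - b‖ ^ 2 := by
      have := congrArg norm (eq_neg_of_add_eq_zero_left h)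
      rw [norm_neg, norm_smul, norm_smul, Real.norm_of_nonneg (by positivity),
        Real.norm_of_nonneg (by positivity)] at this
      field_simp at this ⊢
      linear_combination this
    have hratio : A * ‖q - b‖ = B * ‖q - a‖ := by
      field_simp at hnorm
      exact (pow_left_inj₀ (by positivity) (by positivity) two_ne_zero).1
        (by linear_combination hnorm)
    -- the two coefficients are in the ratio `B : A`
    have hc₁ : A ^ 2 / ‖q - a‖ ^ 3 = A ^ 2 / (B * ‖q - a‖ ^ 3) * B := by field_simp
    have hc₂ : B ^ 2 / ‖q - b‖ ^ 3 = A ^ 2 / (B * ‖q - a‖ ^ 3) * A := by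
      rw [eq_div_of_mul_eq hA.ne' ((mul_comm _ _).trans hratio)]
      field_simp
    rw [hc₁, hc₂, mul_smul, mul_smul, ← smul_add, smul_eq_zero_iff_right (by positivity)] at h
    rw [eq_inv_smul_iff₀ (by positivity)]
    linear_combination (norm := module) h
  · intro hq
    have hqa : q - a = (A / (A + B)) • (b - a) := by
      rw [hq]; match_scalars <;> field_simp; ring
    have hqb : q - b = (B / (A + B)) • (a - b) := by
      rw [hq]; match_scalars <;> field_simp; ring
    have hd : 0 < ‖b - a‖ :=
      norm_pos_iff.2 fun hab => ha (sub_eq_zero.1 (by rw [hqa, hab, smul_zero]))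
    rw [hqa, hqb, norm_smul, norm_smul, Real.norm_of_nonneg (by positivity),
      Real.norm_of_nonneg (by positivity), norm_sub_rev a b, smul_smul, smul_smul,
      ← neg_sub b a, smul_neg, ← sub_eq_add_neg, sub_eq_zero]
    congr 1
    field_simp

end NormedSpace

theorem hasFDerivAt_eulerHamiltonian (μ : ℝ) {q : EuclideanSpace ℝ (Fin 2)}
    (p : EuclideanSpace ℝ (Fin 2)) (hE : q ≠ Earth) (hM : q ≠ Moon) :
    HasFDerivAt (eulerHamiltonian μ)
      ((innerSL ℝ (twoCenterGradient (1 - μ) μ Earth Moon q)).coprod (innerSL ℝ p)) (q, p) := by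
  have hfst := hasFDerivAt_fst (𝕜 := ℝ) (p := (q, p))
  have H := ((HasFDerivAt.mul_const (hasFDerivAt_snd (p := (q, p))).norm_sq 2⁻¹).sub
    (((hasFDerivAt_inv_norm_sub hE).comp (q, p) hfst).const_mul (1 - μ))).sub
    (((hasFDerivAt_inv_norm_sub hM).comp (q, p) hfst).const_mul μ)
  refine (H.congr_fderiv ?_).congr_of_eventuallyEq (Filter.Eventually.of_forall fun x => ?_)
  · ext v
    · simp only [map_sub, neg_smul, neg_comp, smul_comp, sub_comp, smul_neg, sub_neg_eq_add,
        add_comp, add_apply, smul_apply, comp_apply, inl_apply, coe_snd', coe_innerSL_apply,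
        inner_zero_right, nsmul_zero, smul_eq_mul, mul_zero, sub_apply, coe_fst', zero_add,
        twoCenterGradient, map_add, map_smul, coprod_comp_inl]
      ring
    · simp
  · simp [eulerHamiltonian, div_eq_mul_inv]

theorem ofLp_twoCenterEquilibrium_earth_moon {μ : ℝ} (hμ0 : 0 < μ) (hμ1 : μ < 1 / 2) :
    WithLp.ofLp (twoCenterEquilibrium (1 - μ) μ Earth Moon) =
      ![(1 - 2 * √(μ * (1 - μ))) / (2 * (1 - 2 * μ)), 0] := by
  have hs : √(1 - μ) ^ 2 = 1 - μ := Real.sq_sqrt (by linarith)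
  have ht : √μ ^ 2 = μ := Real.sq_sqrt hμ0.le
  have hst : 0 < √(1 - μ) + √μ := by positivity
  ext i
  fin_cases i
  · simp only [twoCenterEquilibrium, Earth, Moon, Fin.zero_eta, PiLp.add_apply, PiLp.smul_apply,
      Matrix.cons_val_zero, smul_eq_mul, Real.sqrt_mul hμ0.le]
    field_simp
    rw [eq_div_iff (by linarith)]
    linear_combination 2 * √μ * hs + 2 * √(1 - μ) * ht
  · simp [twoCenterEquilibrium, Earth, Moon]

/-- For 0 < μ < 1/2 and l = (1 - 2√(μ(1-μ)))/(2(1-2μ)), a point (q,p) with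
q ∉ {E, M} is a critical point of the Hamiltonian H_μ iff p = 0 and q = (l,0). -/
theorem euler_hamiltonian_critical_point (μ : ℝ) (hμ0 : 0 < μ) (hμ1 : μ < 1/2)
    (l : ℝ) (hl : l = (1 - 2 * Real.sqrt (μ * (1 - μ))) / (2 * (1 - 2 * μ))) :
    ∀ q p : EuclideanSpace ℝ (Fin 2), q ≠ Earth → q ≠ Moon →
      (fderiv ℝ (eulerHamiltonian μ) (q, p) = 0 ↔ p = 0 ∧ q = ![l, 0]) := by
  intro q p hE hM
  rw [(hasFDerivAt_eulerHamiltonian μ p hE hM).fderiv, coprod_eq_zero_iff, innerSL_eq_zero_iff,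
    innerSL_eq_zero_iff, and_comm, twoCenterGradient_eq_zero_iff (by linarith) hμ0 hE hM, hl,
    ← ofLp_twoCenterEquilibrium_earth_moon hμ0 hμ1]
  exact and_congr_right' (WithLp.ofLp_injective 2).eq_iff.symm
end

section
/- For every mass ratio μ with 0 < μ < 1/2, setting l = (1 − 2√(μ(1−μ)))/(2(1−2μ)), the value of the Euler potential at the critical point (l, 0) is V_μ(l, 0) = −1 − 2√(μ(1−μ)); that is, the critical Jacobi energy equals c_J = −1 − 2√(μ(1−μ)). -/
noncomputable def eulerPotential (μ : ℝ) (q : EuclideanSpace ℝ (Fin 2)) : ℝ :=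
  -(1 - μ) / ‖q - Earth‖ - μ / ‖q - Moon‖

open Real

lemma norm_vec2_sub_vec2_of_snd_eq_zero (x y : ℝ) : ‖!₂[x, 0] - !₂[y, 0]‖ = |x - y| := by
  simp [EuclideanSpace.norm_eq, Fin.sum_univ_two, sqrt_sq_eq_abs]

lemma eulerPotential_vec2_of_snd_eq_zero (μ x : ℝ) :
    eulerPotential μ !₂[x, 0] = -(1 - μ) / |x + 1/2| - μ / |x - 1/2| := by
  rw [eulerPotential, Earth, Moon, norm_vec2_sub_vec2_of_snd_eq_zero,
    norm_vec2_sub_vec2_of_snd_eq_zero, sub_neg_eq_add]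

lemma eulerPotential_at_balance_point {μ : ℝ} (hμ0 : 0 < μ) (hμ1 : μ < 1) :
    eulerPotential μ !₂[(√(1 - μ) - √μ) / (2 * (√(1 - μ) + √μ)), 0] =
      -(√(1 - μ) + √μ) ^ 2 := by
  set a := √(1 - μ)
  set b := √μ
  have ha : 0 < a := sqrt_pos.mpr (by linarith)
  have hb : 0 < b := sqrt_pos.mpr hμ0
  have ha2 : a ^ 2 = 1 - μ := sq_sqrt (by linarith)
  have hb2 : b ^ 2 = μ := sq_sqrt hμ0.le
  have hE : (a - b) / (2 * (a + b)) + 1/2 = a / (a + b) := by field_simp; ring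
  have hM : (a - b) / (2 * (a + b)) - 1/2 = -(b / (a + b)) := by field_simp; ring
  rw [eulerPotential_vec2_of_snd_eq_zero, hE, hM, abs_neg,
    abs_of_pos (by positivity), abs_of_pos (by positivity), ← ha2, ← hb2]
  field_simp
  ring

lemma critical_abscissa_eq {μ : ℝ} (hμ0 : 0 < μ) (hμ1 : μ < 1) (hμ : μ ≠ 1/2) :
    (1 - 2 * √(μ * (1 - μ))) / (2 * (1 - 2 * μ)) =
      (√(1 - μ) - √μ) / (2 * (√(1 - μ) + √μ)) := by
  have ha2 : √(1 - μ) ^ 2 = 1 - μ := sq_sqrt (by linarith)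
  have hb2 : √μ ^ 2 = μ := sq_sqrt hμ0.le
  have hsum : √(1 - μ) + √μ ≠ 0 := by positivity
  have hdiff : 1 - 2 * μ ≠ 0 := by contrapose! hμ; linarith
  rw [sqrt_mul hμ0.le]
  field_simp
  linear_combination (-2 * √μ) * ha2 + (-2 * √(1 - μ)) * hb2

/-- For 0 < μ < 1/2 and l = (1 - 2√(μ(1-μ)))/(2(1-2μ)), the value of the Euler
potential at the critical point (l, 0) is the critical Jacobi energy
c_J = -1 - 2√(μ(1-μ)). -/
theorem euler_potential_critical_value (μ : ℝ) (hμ0 : 0 < μ) (hμ1 : μ < 1/2)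
    (l : ℝ) (hl : l = (1 - 2 * Real.sqrt (μ * (1 - μ))) / (2 * (1 - 2 * μ))) :
    eulerPotential μ !₂[l, 0] = -1 - 2 * Real.sqrt (μ * (1 - μ)) := by
  have hμ1' : μ < 1 := by linarith
  rw [hl, critical_abscissa_eq hμ0 hμ1' hμ1.ne, eulerPotential_at_balance_point hμ0 hμ1',
    sqrt_mul hμ0.le, add_sq, sq_sqrt (by linarith), sq_sqrt hμ0.le]
  ring
end

section
/- For every mass ratio μ with 0 < μ < 1/2, set l = (1 − 2√(μ(1−μ)))/(2(1−2μ)). At the critical point (l, 0) of the Euler potential V_μ, the second partial derivatives satisfy ∂²V_μ/∂q₁²(l,0) < 0, ∂²V_μ/∂q₂²(l,0) > 0, and ∂²V_μ/∂q₁∂q₂(l,0) = 0; in particular the Hessian of V_μ at (l,0) is nondegenerate and indefinite, so (l,0) is a saddle point of Morse index 1. -/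
open Filter Topology

theorem deriv_deriv_eq_of_eventually_hasDerivAt {𝕜 F : Type*} [NontriviallyNormedField 𝕜]
    [NormedAddCommGroup F] [NormedSpace 𝕜 F] {f f' : 𝕜 → F} {t : 𝕜} {a : F}
    (hf : ∀ᶠ s in 𝓝 t, HasDerivAt f (f' s) s) (hf' : HasDerivAt f' a t) :
    deriv (deriv f) t = a := by
  have hderiv : deriv f =ᶠ[𝓝 t] f' := hf.mono fun s hs => hs.deriv
  rw [hderiv.deriv_eq, hf'.deriv]

theorem Function.Even.deriv_zero {F : Type*} [NormedAddCommGroup F] [NormedSpace ℝ F]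
    {f : ℝ → F} (hf : f.Even) : deriv f 0 = 0 := by
  have h := deriv_comp_neg (f := f) (x := 0)
  rw [show (fun x => f (-x)) = f from funext hf, neg_zero, eq_neg_iff_add_eq_zero,
    ← two_smul ℝ, smul_eq_zero] at h
  exact h.resolve_left two_ne_zero

/-- Both restrictions of `V_μ` used below are combinations of two of these: on the axis `k = 0`
and `p` is a primary; on a vertical line `p = 0` and `k` is the squared horizontal offset. -/
noncomputable def invDist (k p s : ℝ) : ℝ := (√(k + (s - p) ^ 2))⁻¹

section invDist

variable {k p t : ℝ}

theorem hasDerivAt_sqrt_add_sub_sq (h : 0 < k + (t - p) ^ 2) :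
    HasDerivAt (fun s => √(k + (s - p) ^ 2)) ((t - p) / √(k + (t - p) ^ 2)) t := by
  have hq : HasDerivAt (fun s => k + (s - p) ^ 2) (2 * (t - p)) t := by
    simpa using (((hasDerivAt_id t).sub_const p).pow 2).const_add k
  exact (hq.sqrt h.ne').congr_deriv (by ring)

theorem hasDerivAt_invDist (h : 0 < k + (t - p) ^ 2) :
    HasDerivAt (invDist k p) (-(t - p) / √(k + (t - p) ^ 2) ^ 3) t := by
  have hr : √(k + (t - p) ^ 2) ≠ 0 := (Real.sqrt_pos.2 h).ne'
  exact ((hasDerivAt_sqrt_add_sub_sq h).fun_inv hr).congr_deriv (by field_simp)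

theorem hasDerivAt_neg_sub_div_sqrt_pow_three (h : 0 < k + (t - p) ^ 2) :
    HasDerivAt (fun s => -(s - p) / √(k + (s - p) ^ 2) ^ 3)
      ((2 * (t - p) ^ 2 - k) / √(k + (t - p) ^ 2) ^ 5) t := by
  have hr : √(k + (t - p) ^ 2) ≠ 0 := (Real.sqrt_pos.2 h).ne'
  have hnum : HasDerivAt (fun s => -(s - p)) (-1) t := ((hasDerivAt_id t).sub_const p).fun_neg
  refine (hnum.fun_div ((hasDerivAt_sqrt_add_sub_sq h).fun_pow 3)
    (pow_ne_zero 3 hr)).congr_deriv ?_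
  field_simp
  norm_num
  linear_combination (-√(k + (t - p) ^ 2) ^ 2) * Real.sq_sqrt h.le

theorem eventually_pos_add_sub_sq (h : 0 < k + (t - p) ^ 2) :
    ∀ᶠ s in 𝓝 t, 0 < k + (s - p) ^ 2 :=
  continuousAt_const.eventually_lt
    (by fun_prop : Continuous fun s => k + (s - p) ^ 2).continuousAt h

end invDist

theorem deriv_deriv_add_invDist (a b k₁ p₁ k₂ p₂ t : ℝ)
    (h₁ : 0 < k₁ + (t - p₁) ^ 2) (h₂ : 0 < k₂ + (t - p₂) ^ 2) :
    deriv (deriv fun s => a * invDist k₁ p₁ s + b * invDist k₂ p₂ s) t =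
      a * ((2 * (t - p₁) ^ 2 - k₁) / √(k₁ + (t - p₁) ^ 2) ^ 5) +
        b * ((2 * (t - p₂) ^ 2 - k₂) / √(k₂ + (t - p₂) ^ 2) ^ 5) := by
  refine deriv_deriv_eq_of_eventually_hasDerivAt ?_
    (((hasDerivAt_neg_sub_div_sqrt_pow_three h₁).const_mul a).add
      ((hasDerivAt_neg_sub_div_sqrt_pow_three h₂).const_mul b))
  filter_upwards [eventually_pos_add_sub_sq h₁, eventually_pos_add_sub_sq h₂] with s hs₁ hs₂
  exact ((hasDerivAt_invDist hs₁).const_mul a).add ((hasDerivAt_invDist hs₂).const_mul b)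

theorem EuclideanSpace.norm_fin_two (v : EuclideanSpace ℝ (Fin 2)) :
    ‖v‖ = √(v 0 ^ 2 + v 1 ^ 2) := by
  simp [EuclideanSpace.norm_eq, Fin.sum_univ_two]

theorem eulerPotential_apply (μ x y : ℝ) :
    eulerPotential μ !₂[x, y] =
      -(1 - μ) * (√((x + 1/2) ^ 2 + y ^ 2))⁻¹ - μ * (√((x - 1/2) ^ 2 + y ^ 2))⁻¹ := by
  simp [eulerPotential, EuclideanSpace.norm_fin_two, Earth, Moon, div_eq_mul_inv]

section eulerPotential

variable {μ x : ℝ}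

theorem deriv_deriv_eulerPotential_horizontal (hE : x + 1/2 ≠ 0) (hM : x - 1/2 ≠ 0) :
    deriv (deriv fun s : ℝ => eulerPotential μ !₂[s, 0]) x =
      -(2 * (1 - μ)) / |x + 1/2| ^ 3 - 2 * μ / |x - 1/2| ^ 3 := by
  have hV : (fun s : ℝ => eulerPotential μ !₂[s, 0]) =
      fun s => -(1 - μ) * invDist 0 (-(1/2)) s + -μ * invDist 0 (1/2) s := by
    funext s
    simp only [eulerPotential_apply, invDist, sub_neg_eq_add]
    ring_nf
  rw [hV, deriv_deriv_add_invDist _ _ _ _ _ _ _ (by simpa [sq_pos_iff] using hE)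
    (by simpa [sq_pos_iff] using hM)]
  simp only [sub_neg_eq_add, zero_add, sub_zero, Real.sqrt_sq_eq_abs]
  rw [← sq_abs (x + 1/2), ← sq_abs (x - 1/2)]
  field_simp
  ring

theorem deriv_deriv_eulerPotential_vertical (hE : x + 1/2 ≠ 0) (hM : x - 1/2 ≠ 0) :
    deriv (deriv fun y : ℝ => eulerPotential μ !₂[x, y]) 0 =
      (1 - μ) / |x + 1/2| ^ 3 + μ / |x - 1/2| ^ 3 := by
  have hV : (fun y : ℝ => eulerPotential μ !₂[x, y]) =
      fun y => -(1 - μ) * invDist ((x + 1/2) ^ 2) 0 y + -μ * invDist ((x - 1/2) ^ 2) 0 y := by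
    funext y
    simp only [eulerPotential_apply, invDist, sub_zero]
    ring
  rw [hV, deriv_deriv_add_invDist _ _ _ _ _ _ _ (by simpa [sq_pos_iff] using hE)
    (by simpa [sq_pos_iff] using hM)]
  simp only [sub_zero, ne_eq, OfNat.ofNat_ne_zero, not_false_eq_true, zero_pow, mul_zero,
    add_zero, zero_sub, Real.sqrt_sq_eq_abs]
  rw [← sq_abs (x + 1/2), ← sq_abs (x - 1/2)]
  field_simp

theorem even_eulerPotential_vertical (μ x : ℝ) :
    (fun y : ℝ => eulerPotential μ !₂[x, y]).Even := by
  intro y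
  simp only [eulerPotential_apply, neg_sq]

end eulerPotential

theorem euler_critical_abscissa_mem_Ioo {μ : ℝ} (hμ0 : 0 < μ) (hμ1 : μ < 1/2) :
    (1 - 2 * √(μ * (1 - μ))) / (2 * (1 - 2 * μ)) ∈ Set.Ioo (-(1/2)) (1/2) := by
  set s := √(μ * (1 - μ))
  have hs : s ^ 2 = μ * (1 - μ) := Real.sq_sqrt (by nlinarith)
  have hs₀ : 0 ≤ s := Real.sqrt_nonneg _
  have hμs : μ < s := by nlinarith
  have hs₁ : s < 1 - μ := by nlinarith
  have hd : 0 < 2 * (1 - 2 * μ) := by linarith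
  constructor
  · rw [lt_div_iff₀ hd]; linarith
  · rw [div_lt_iff₀ hd]; linarith

/-- At the critical point (l, 0) of the Euler potential V_μ (where 0 < μ < 1/2 and
l = (1 - 2√(μ(1-μ)))/(2(1-2μ))) one has ∂²V/∂q₁² < 0, ∂²V/∂q₂² > 0 and
∂²V/∂q₁∂q₂ = 0; in particular the Hessian is nondegenerate and indefinite
(its determinant is negative), so (l,0) is a saddle point of Morse index 1. -/
theorem euler_potential_hessian_saddle (μ : ℝ) (hμ0 : 0 < μ) (hμ1 : μ < 1/2)
    (l : ℝ) (hl : l = (1 - 2 * Real.sqrt (μ * (1 - μ))) / (2 * (1 - 2 * μ))) :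
    deriv (deriv (fun x : ℝ => eulerPotential μ !₂[x, 0])) l < 0 ∧
    deriv (deriv (fun y : ℝ => eulerPotential μ !₂[l, y])) 0 > 0 ∧
    deriv (fun x : ℝ => deriv (fun y : ℝ => eulerPotential μ !₂[x, y]) 0) l = 0 ∧
    deriv (deriv (fun x : ℝ => eulerPotential μ !₂[x, 0])) l *
        deriv (deriv (fun y : ℝ => eulerPotential μ !₂[l, y])) 0 -
      (deriv (fun x : ℝ => deriv (fun y : ℝ => eulerPotential μ !₂[x, y]) 0) l) ^ 2 < 0 := by
  obtain ⟨hl₁, hl₂⟩ := hl ▸ euler_critical_abscissa_mem_Ioo hμ0 hμ1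
  have hE : 0 < |l + 1/2| := abs_pos.2 (by linarith)
  have hM : 0 < |l - 1/2| := abs_pos.2 (by linarith)
  have h1μ : 0 < 1 - μ := by linarith
  have hxx : deriv (deriv fun x : ℝ => eulerPotential μ !₂[x, 0]) l < 0 := by
    rw [deriv_deriv_eulerPotential_horizontal (abs_pos.1 hE) (abs_pos.1 hM)]
    have hE' : 0 < 2 * (1 - μ) / |l + 1/2| ^ 3 := by positivity
    have hM' : 0 < 2 * μ / |l - 1/2| ^ 3 := by positivity
    rw [neg_div]
    linarith
  have hyy : deriv (deriv fun y : ℝ => eulerPotential μ !₂[l, y]) 0 > 0 := by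
    rw [deriv_deriv_eulerPotential_vertical (abs_pos.1 hE) (abs_pos.1 hM)]
    positivity
  have hxy : deriv (fun x : ℝ => deriv (fun y : ℝ => eulerPotential μ !₂[x, y]) 0) l = 0 := by
    simp only [(even_eulerPotential_vertical μ _).deriv_zero, deriv_const]
  refine ⟨hxx, hyy, hxy, ?_⟩
  rw [hxy]
  nlinarith [mul_neg_of_neg_of_pos hxx hyy]
end
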